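/- Let V and V' be left vector spaces over division rings R and R' with dim V = n ≥ 2 finite, and let g : V → V' be a non-trivial GL-mapping such that the R'-subspace spanned by g(V) has dimension at most n. Then for every non-zero subspace S ⊆ V, the R'-subspace of V' spanned by g(S) has dimension equal to dim S. -/

import Mathlib

/-!
Since `GL(V)` acts transitively on the subspaces of a given dimension, `dim S_g` depends only
on `dim S`, and the point is that it strictly increases along every cover `S ⋖ T`. Otherwise
`S_g = T_g`, and comparing `T` with `S ⊔ ⟨v⟩` shows `g v ∈ S_g` for all `v`, so `S_g = V_g`;
then `H_g = V_g` for every hyperplane `H`. The companion `u'` of a transvection `u` fixing `H`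
is therefore the identity on `V_g`, so `g ∘ u = g`. As transvections map `x` to any
`y ∉ ⟨x⟩`, this makes `g` constant on `V ∖ {0}` once `n ≥ 2`. Finally, a function strictly
increasing along covers, with value at most `n` at `⊤`, must be `S ↦ dim S`.
-/

open Module Submodule

section DivisionRing

variable {K V : Type*} [DivisionRing K] [AddCommGroup V] [Module K V]

theorem Submodule.exists_le_finrank_eq {H : Submodule K V} {k : ℕ} (hk : k ≤ finrank K H) :
    ∃ S ≤ H, finrank K S = k := by
  obtain ⟨b, hb⟩ := exists_linearIndependent_of_le_finrank hk
  refine ⟨span K (Set.range (H.subtype ∘ b)), ?_, ?_⟩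
  · rw [span_le]
    rintro _ ⟨i, rfl⟩
    exact (b i).2
  · rw [finrank_span_eq_card (hb.map' H.subtype H.ker_subtype), Fintype.card_fin]

theorem Submodule.exists_linearEquiv_map_eq_of_finrank_eq [FiniteDimensional K V]
    {S T : Submodule K V} (h : finrank K S = finrank K T) :
    ∃ u : V ≃ₗ[K] V, S.map (u : V →ₗ[K] V) = T := by
  obtain ⟨S', hS'⟩ := exists_isCompl S
  obtain ⟨T', hT'⟩ := exists_isCompl T
  have h' : finrank K S' = finrank K T' := by
    have := finrank_add_eq_of_isCompl hS'
    have := finrank_add_eq_of_isCompl hT'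
    omega
  obtain ⟨e⟩ := FiniteDimensional.nonempty_linearEquiv_of_finrank_eq h
  obtain ⟨e'⟩ := FiniteDimensional.nonempty_linearEquiv_of_finrank_eq h'
  set u := ((prodEquivOfIsCompl S S' hS').symm.trans (e.prodCongr e')).trans
    (prodEquivOfIsCompl T T' hT')
  have hu : ∀ s : S, u s = e s := fun s => by
    simp [u, prodEquivOfIsCompl_symm_apply_left _ _ hS' s]
  refine ⟨u, le_antisymm ?_ fun t ht => ?_⟩
  · rintro _ ⟨s, hs, rfl⟩
    simp [hu ⟨s, hs⟩]
  · exact ⟨e.symm ⟨t, ht⟩, (e.symm ⟨t, ht⟩).2, by simp [hu]⟩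

theorem notMem_span_singleton_sub {x y : V} (hx : x ≠ 0) (hy : y ∉ span K {x}) :
    x ∉ span K {y - x} := by
  intro hx'
  obtain ⟨c, hc⟩ := mem_span_singleton.1 hx'
  have hc0 : c ≠ 0 := by rintro rfl; simp [eq_comm, hx] at hc
  apply hy
  have hyx : y - x = c⁻¹ • x := (eq_inv_smul_iff₀ hc0).2 hc
  have : y = (c⁻¹ + 1) • x := by rw [add_smul, one_smul, ← hyx, sub_add_cancel]
  exact this ▸ smul_mem _ _ (mem_span_singleton_self x)

theorem exists_linearEquiv_apply_eq_fixing_hyperplane [FiniteDimensional K V] {x y : V}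
    (h : x ∉ span K {y - x}) :
    ∃ H : Submodule K V, finrank K V ≤ finrank K H + 1 ∧
      ∃ u : V ≃ₗ[K] V, u x = y ∧ ∀ z ∈ H, u z = z := by
  obtain ⟨f, hfx, hf⟩ := exists_dual_map_eq_bot_of_notMem h inferInstance
  have hfyx : f (y - x) = 0 := (mem_bot K).1 (hf ▸ mem_map_of_mem (mem_span_singleton_self _))
  have hfv : f ((f x)⁻¹ • (y - x)) = 0 := by rw [map_smul, hfyx, smul_zero]
  refine ⟨LinearMap.ker f, ?_, LinearEquiv.transvection hfv, ?_, fun z hz => ?_⟩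
  · have := LinearMap.finrank_range_add_finrank_ker f
    have := (LinearMap.range f).finrank_le.trans_eq (finrank_self K)
    omega
  · simp [LinearMap.transvection.apply, smul_smul, mul_inv_cancel₀ hfx]
  · simp [LinearMap.transvection.apply, LinearMap.mem_ker.1 hz]

theorem eq_of_forall_notMem_span_singleton {α : Type*} {g : V → α} (hV : 1 < finrank K V)
    (hg : ∀ x y, x ≠ 0 → y ∉ span K {x} → g y = g x) {x y : V} (hx : x ≠ 0)
    (hy : y ≠ 0) :
    g x = g y := by
  by_cases hyx : y ∈ span K {x}
  · have : span K {x} < ⊤ := by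
      refine lt_top_iff_ne_top.2 fun htop => ?_
      have := finrank_span_singleton (K := K) hx
      rw [htop, finrank_top] at this
      omega
    obtain ⟨z, -, hz⟩ := SetLike.exists_of_lt this
    have hzy : z ∉ span K {y} := fun h => hz ((span_singleton_le_iff_mem _ _).2 hyx h)
    rw [← hg x z hx hz, hg y z hy hzy]
  · exact (hg x y hx hyx).symm

theorem add_finrank_le_add_finrank_of_cover_lt [FiniteDimensional K V]
    (φ : Submodule K V → ℕ)
    (hφ : ∀ {S T : Submodule K V}, S ≤ T → finrank K T = finrank K S + 1 → φ S < φ T)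
    {S T : Submodule K V} (hST : S ≤ T) : φ S + finrank K T ≤ φ T + finrank K S := by
  obtain ⟨d, hd⟩ := Nat.exists_eq_add_of_le (finrank_mono hST)
  induction d generalizing S with
  | zero => rw [eq_of_le_of_finrank_eq hST hd.symm]
  | succ d ih =>
    obtain ⟨v, hvT, hvS⟩ := SetLike.exists_of_lt (lt_of_le_of_ne hST (by rintro rfl; omega))
    have hS' := finrank_sup_span_singleton hvS
    have := ih (sup_le hST ((span_singleton_le_iff_mem _ _).2 hvT)) (by omega)
    have := hφ le_sup_left hS'
    omega

end DivisionRing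

section GLMapping

theorem finiteDimensional_span_image {V R' V' : Type*} [DivisionRing R'] [AddCommGroup V']
    [Module R' V'] (g : V → V') [FiniteDimensional R' (span R' (Set.range g))] (A : Set V) :
    FiniteDimensional R' (span R' (g '' A)) :=
  finiteDimensional_of_le (span_mono (Set.image_subset_range g A))

variable {R R' V V' : Type*} [DivisionRing R] [DivisionRing R']
  [AddCommGroup V] [Module R V] [AddCommGroup V'] [Module R' V']

variable (R R') in
def IsGLMapping (g : V → V') : Prop :=
  ∀ u : V ≃ₗ[R] V, ∃ u' : V' ≃ₗ[R'] V', g ∘ ⇑u = ⇑u' ∘ g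

namespace IsGLMapping

variable {g : V → V'}

theorem finrank_span_image_eq (hg : IsGLMapping R R' g) [FiniteDimensional R V]
    {S T : Submodule R V} (h : finrank R S = finrank R T) :
    finrank R' (span R' (g '' S)) = finrank R' (span R' (g '' T)) := by
  obtain ⟨u, rfl⟩ := exists_linearEquiv_map_eq_of_finrank_eq h
  obtain ⟨u', hu'⟩ := hg u
  have : g '' (S.map (u : V →ₗ[R] V)) = u' '' (g '' S) := by
    rw [map_coe, Set.image_image, Set.image_image]
    exact Set.image_congr fun x _ => congrFun hu' x
  rw [this, span_image_linearEquiv, LinearEquiv.finrank_map_eq]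

theorem apply_eq_of_forall_mem_apply_eq (hg : IsGLMapping R R' g) {H : Submodule R V}
    (hH : span R' (g '' H) = span R' (Set.range g)) {u : V ≃ₗ[R] V} (hu : ∀ z ∈ H, u z = z)
    (x : V) : g (u x) = g x := by
  obtain ⟨u', hu'⟩ := hg u
  have hfix : Set.EqOn (u' : V' →ₗ[R'] V') (LinearMap.id : V' →ₗ[R'] V') (g '' H) := by
    rintro _ ⟨z, hz, rfl⟩
    simpa [hu z hz] using (congrFun hu' z).symm
  rw [show g (u x) = u' (g x) from congrFun hu' x]
  exact LinearMap.eqOn_span' hfix (hH ▸ subset_span ⟨x, rfl⟩)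

variable [FiniteDimensional R V] [FiniteDimensional R' (span R' (Set.range g))]

theorem span_image_eq_span_range_of_cover (hg : IsGLMapping R R' g) {S T : Submodule R V}
    (hT : finrank R T = finrank R S + 1) (heq : span R' (g '' S) = span R' (g '' T)) :
    span R' (g '' S) = span R' (Set.range g) := by
  refine le_antisymm (span_mono (Set.image_subset_range g _)) (span_le.2 ?_)
  rintro _ ⟨v, rfl⟩
  by_cases hv : v ∈ S
  · exact subset_span ⟨v, hv, rfl⟩
  have hT' : finrank R (S ⊔ span R {v} : Submodule R V) = finrank R T := by
    rw [finrank_sup_span_singleton hv, hT]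
  have := finiteDimensional_span_image (R' := R') g (S ⊔ span R {v} : Submodule R V)
  have hS : span R' (g '' S) = span R' (g '' (S ⊔ span R {v} : Submodule R V)) :=
    eq_of_le_of_finrank_eq (span_mono (Set.image_mono (SetLike.coe_mono le_sup_left)))
      (by rw [heq, hg.finrank_span_image_eq hT'])
  exact hS ▸ subset_span ⟨v, mem_sup_right (mem_span_singleton_self v), rfl⟩

theorem span_image_eq_span_range_of_finrank_le (hg : IsGLMapping R R' g) {S H : Submodule R V}
    (hS : span R' (g '' S) = span R' (Set.range g)) (hSH : finrank R S ≤ finrank R H) :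
    span R' (g '' H) = span R' (Set.range g) := by
  obtain ⟨S', hS'H, hS'⟩ := exists_le_finrank_eq hSH
  have hS'W : span R' (g '' S') = span R' (Set.range g) :=
    eq_of_le_of_finrank_eq (span_mono (Set.image_subset_range g _))
      (by rw [← hS, hg.finrank_span_image_eq hS'])
  exact le_antisymm (span_mono (Set.image_subset_range g _))
    (hS'W ▸ span_mono (Set.image_mono (SetLike.coe_mono hS'H)))

theorem finrank_span_image_lt_of_cover (hg : IsGLMapping R R' g) (hV : 1 < finrank R V)
    (hnt : ∃ x y : V, x ≠ 0 ∧ y ≠ 0 ∧ g x ≠ g y) {S T : Submodule R V} (hST : S ≤ T)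
    (hT : finrank R T = finrank R S + 1) :
    finrank R' (span R' (g '' S)) < finrank R' (span R' (g '' T)) := by
  have := finiteDimensional_span_image (R' := R') g T
  refine finrank_lt_finrank_of_lt <|
    lt_of_le_of_ne (span_mono (Set.image_mono (SetLike.coe_mono hST))) fun heq => ?_
  have hSW := hg.span_image_eq_span_range_of_cover hT heq
  obtain ⟨a, b, ha, hb, hab⟩ := hnt
  refine hab (eq_of_forall_notMem_span_singleton hV (fun x y hx hy => ?_) ha hb)
  obtain ⟨H, hH, u, rfl, hu⟩ :=
    exists_linearEquiv_apply_eq_fixing_hyperplane (notMem_span_singleton_sub hx hy)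
  have hSH : finrank R S ≤ finrank R H := by
    have := T.finrank_le
    omega
  exact hg.apply_eq_of_forall_mem_apply_eq (hg.span_image_eq_span_range_of_finrank_le hSW hSH) hu x

end IsGLMapping

end GLMapping

/-- **Lemma 7 (Pankov).** If `g` is a non-trivial GL-mapping with `dim V_g ≤ n`, then
`dim S_g = dim S` for every non-zero subspace `S ⊆ V`. -/
theorem stmt_11 {R R' V V' : Type*} [DivisionRing R] [DivisionRing R']
    [AddCommGroup V] [Module R V] [AddCommGroup V'] [Module R' V']
    (n : ℕ) (hn : 2 ≤ n) [FiniteDimensional R V] (hdim : Module.finrank R V = n)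
    (g : V → V')
    (hGL : ∀ u : V ≃ₗ[R] V, ∃ u' : V' ≃ₗ[R'] V', g ∘ ⇑u = ⇑u' ∘ g)
    (hnt : ∃ x y : V, x ≠ 0 ∧ y ≠ 0 ∧ g x ≠ g y)
    (hspan : Module.rank R' (Submodule.span R' (Set.range g)) ≤ n) :
    ∀ S : Submodule R V, S ≠ ⊥ →
      Module.rank R' (Submodule.span R' (g '' (S : Set V)))
        = (Module.finrank R S : Cardinal) := by
  intro S _
  have : FiniteDimensional R' (span R' (Set.range g)) :=
    rank_lt_aleph0_iff.1 (hspan.trans_lt Cardinal.natCast_lt_aleph0)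
  have := finiteDimensional_span_image (R' := R') g S
  have hg : IsGLMapping R R' g := hGL
  have hV : 1 < finrank R V := by omega
  have hlower := add_finrank_le_add_finrank_of_cover_lt _
    (hg.finrank_span_image_lt_of_cover hV hnt) (bot_le (a := S))
  have hupper := add_finrank_le_add_finrank_of_cover_lt _
    (hg.finrank_span_image_lt_of_cover hV hnt) (le_top (a := S))
  rw [finrank_bot] at hlower
  rw [top_coe, Set.image_univ, finrank_top, hdim] at hupper
  have hW := finrank_le_of_rank_le hspan
  rw [← finrank_eq_rank]
  exact_mod_cast (show finrank R' (span R' (g '' S)) = finrank R S by omega)
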